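/- arXiv:1812.01107 — 3 statements merged into one kernel-verified Lean document; each statement's English description precedes it below -/
import Mathlib

section
/- For any positive integers m, n, p, q with nq > mp, the triangle with side lengths a = mn(p² + q²), b = pq(m² + n²), c = pq(n² − m²) + mn(q² − p²) (assuming all are positive and satisfy the triangle inequality) has area equal to mnpq(mq + np)(nq − mp), which is an integer; in particular it is a Heron triangle. -/
/-!
For Schubert's sides the four factors of Heron's product are
`a + b + c = 2nq(mq + np)`, `-a + b + c = 2np(nq - mp)`, `a - b + c = 2mq(nq - mp)` and
`a + b - c = 2mp(mq + np)`, so the product is the square of `4mnpq(mq + np)(nq - mp)`,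
which is nonnegative because `nq > mp`.
-/

theorem heron_product_schubert_eq_sq {R : Type*} [CommRing R] {m n p q a b c : R}
    (hA : a = m * n * (p ^ 2 + q ^ 2))
    (hB : b = p * q * (m ^ 2 + n ^ 2))
    (hC : c = p * q * (n ^ 2 - m ^ 2) + m * n * (q ^ 2 - p ^ 2)) :
    (a + b + c) * (-a + b + c) * (a - b + c) * (a + b - c) =
      (4 * (m * n * p * q * (m * q + n * p) * (n * q - m * p))) ^ 2 := by
  subst hA hB hC
  have h₁ : m * n * (p ^ 2 + q ^ 2) + p * q * (m ^ 2 + n ^ 2) +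
      (p * q * (n ^ 2 - m ^ 2) + m * n * (q ^ 2 - p ^ 2)) = 2 * n * q * (m * q + n * p) := by
    ring
  have h₂ : -(m * n * (p ^ 2 + q ^ 2)) + p * q * (m ^ 2 + n ^ 2) +
      (p * q * (n ^ 2 - m ^ 2) + m * n * (q ^ 2 - p ^ 2)) = 2 * n * p * (n * q - m * p) := by
    ring
  have h₃ : m * n * (p ^ 2 + q ^ 2) - p * q * (m ^ 2 + n ^ 2) +
      (p * q * (n ^ 2 - m ^ 2) + m * n * (q ^ 2 - p ^ 2)) = 2 * m * q * (n * q - m * p) := by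
    ring
  have h₄ : m * n * (p ^ 2 + q ^ 2) + p * q * (m ^ 2 + n ^ 2) -
      (p * q * (n ^ 2 - m ^ 2) + m * n * (q ^ 2 - p ^ 2)) = 2 * m * p * (m * q + n * p) := by
    ring
  rw [h₁, h₂, h₃, h₄]
  ring

theorem Real.one_div_four_mul_sqrt_four_mul_sq {k : ℝ} (hk : 0 ≤ k) :
    1 / 4 * √((4 * k) ^ 2) = k := by
  rw [Real.sqrt_sq (by positivity)]
  ring

theorem heron_parameterization_general (m n p q : ℤ)
    (hm : 0 < m) (hn : 0 < n) (hp : 0 < p) (hq : 0 < q)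
    (hlt : m * p < n * q)
    (a b c : ℤ)
    (hA : a = m * n * (p ^ 2 + q ^ 2))
    (hB : b = p * q * (m ^ 2 + n ^ 2))
    (hC : c = p * q * (n ^ 2 - m ^ 2) + m * n * (q ^ 2 - p ^ 2)) :
    (1 / 4 : ℝ) * Real.sqrt (((a + b + c) * (-a + b + c) * (a - b + c) * (a + b - c) : ℤ)) =
      ((m * n * p * q * (m * q + n * p) * (n * q - m * p) : ℤ) : ℝ) := by
  have hK : (0 : ℤ) ≤ m * n * p * q * (m * q + n * p) * (n * q - m * p) := by
    have := sub_pos.2 hlt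
    positivity
  rw [heron_product_schubert_eq_sq hA hB hC, Int.cast_pow, Int.cast_mul, Int.cast_ofNat]
  exact Real.one_div_four_mul_sqrt_four_mul_sq (by exact_mod_cast hK)

/-- Schubert's parameterization of Heron triangles: for positive integers
`m n p q` with `nq > mp`, the triangle with sides `a = mn(p²+q²)`,
`b = pq(m²+n²)`, `c = pq(n²−m²) + mn(q²−p²)` (assumed positive and satisfying
the triangle inequality) has Heron area equal to the integer
`mnpq(mq+np)(nq−mp)`. -/
theorem heron_parameterization (m n p q : ℤ)
    (hm : 0 < m) (hn : 0 < n) (hp : 0 < p) (hq : 0 < q)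
    (hlt : m * p < n * q)
    (a b c : ℤ)
    (hA : a = m * n * (p ^ 2 + q ^ 2))
    (hB : b = p * q * (m ^ 2 + n ^ 2))
    (hC : c = p * q * (n ^ 2 - m ^ 2) + m * n * (q ^ 2 - p ^ 2))
    (hapos : 0 < a) (hbpos : 0 < b) (hcpos : 0 < c)
    (htri1 : a < b + c) (htri2 : b < a + c) (htri3 : c < a + b) :
    (1 / 4 : ℝ) * Real.sqrt (((a + b + c) * (-a + b + c) * (a - b + c) * (a + b - c) : ℤ)) =
      ((m * n * p * q * (m * q + n * p) * (n * q - m * p) : ℤ) : ℝ) :=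
  heron_parameterization_general m n p q hm hn hp hq hlt a b c hA hB hC
end

section
/- If a triangle has integer side lengths and rational area, then its area is an integer. -/
set_option maxHeartbeats 2000000 in
lemma key16_aux : ∀ a b c m : ZMod 16,
    m ^ 2 = (a + b + c) * (-a + b + c) * (a - b + c) * (a + b - c) →
    (a + b + c) * (-a + b + c) * (a - b + c) * (a + b - c) = 0 := by decide

lemma four_dvd_of_sixteen_dvd_sq (m : ℤ) (h : (16 : ℤ) ∣ m ^ 2) : (4 : ℤ) ∣ m := by
  have h2 : (2 : ℤ) ∣ m := by
    have : (2 : ℤ) ∣ m ^ 2 := dvd_trans (by norm_num) h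
    exact Int.prime_two.dvd_of_dvd_pow this
  obtain ⟨n, rfl⟩ := h2
  have h4 : (4 : ℤ) ∣ n ^ 2 := by
    obtain ⟨k, hk⟩ := h
    refine ⟨k, ?_⟩
    have e : (2 * n) ^ 2 = 4 * n ^ 2 := by ring
    linarith [hk, e]
  have h2n : (2 : ℤ) ∣ n := by
    have : (2 : ℤ) ∣ n ^ 2 := dvd_trans (by norm_num) h4
    exact Int.prime_two.dvd_of_dvd_pow this
  obtain ⟨k, rfl⟩ := h2n
  exact ⟨k, by ring⟩

/-- If a triangle has integer side lengths and rational area, then its area is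
an integer. -/
theorem integer_sides_rational_area_is_integer (a b c : ℤ) (A : ℝ)
    (ha : 0 < a) (hb : 0 < b) (hc : 0 < c)
    (htri1 : a < b + c) (htri2 : b < a + c) (htri3 : c < a + b)
    (hA : A = (1 / 4 : ℝ) *
      Real.sqrt (((a + b + c) * (-a + b + c) * (a - b + c) * (a + b - c) : ℤ)))
    (hrat : ∃ q : ℚ, A = q) :
    ∃ n : ℤ, A = n := by
  obtain ⟨q, hq⟩ := hrat
  set N : ℤ := (a + b + c) * (-a + b + c) * (a - b + c) * (a + b - c) with hN
  have hNpos : 0 ≤ N := by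
    have h1 : 0 < a + b + c := by omega
    have h2 : 0 < -a + b + c := by omega
    have h3 : 0 < a - b + c := by omega
    have h4 : 0 < a + b - c := by omega
    positivity
  have hNR : (0 : ℝ) ≤ (N : ℝ) := by exact_mod_cast hNpos
  have hsqrt : Real.sqrt (N : ℝ) = 4 * A := by rw [hA]; ring
  have hsq : ((4 * q : ℚ) : ℝ) ^ 2 = (N : ℝ) := by
    have : ((4 * q : ℚ) : ℝ) = 4 * A := by rw [hq]; push_cast; ring
    rw [this, ← hsqrt, Real.sq_sqrt hNR]
  have hsqQ : (4 * q) ^ 2 = (N : ℚ) := by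
    have := hsq
    rw [show ((N : ℤ) : ℝ) = (((N : ℚ) : ℝ)) by push_cast; ring] at this
    exact_mod_cast this
  -- 4*q is an integer
  set r : ℚ := 4 * q with hr
  have hden : r.den = 1 := by
    have : (r ^ 2).den = 1 := by rw [hsqQ]; exact Rat.den_intCast N
    rw [Rat.den_pow] at this
    nlinarith [r.den_pos]
  set m : ℤ := r.num with hm
  have hrm : (m : ℚ) = r := by rw [hm, ← Rat.den_eq_one_iff]; exact hden
  have hmsq : m ^ 2 = N := by
    have : ((m : ℚ)) ^ 2 = (N : ℚ) := by rw [hrm]; exact hsqQ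
    exact_mod_cast this
  -- 16 ∣ N
  have h16 : (16 : ℤ) ∣ N := by
    have hz : ((m : ZMod 16)) ^ 2 = ((a : ZMod 16) + b + c) * (-(a : ZMod 16) + b + c) * ((a : ZMod 16) - b + c) * ((a : ZMod 16) + b - c) := by
      have hmsq' : m ^ 2 = (a + b + c) * (-a + b + c) * (a - b + c) * (a + b - c) :=
        hmsq.trans hN
      have h1 := congrArg (fun x : ℤ => (x : ZMod 16)) hmsq'
      push_cast at h1
      linear_combination h1
    have hNz : ((N : ZMod 16)) = 0 := by
      have h1 : ((m : ZMod 16)) ^ 2 = ((N : ℤ) : ZMod 16) := by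
        have h2 := congrArg (fun x : ℤ => (x : ZMod 16)) hmsq
        push_cast at h2
        exact h2
      rw [← h1, hz]
      exact key16_aux a b c m hz
    exact (ZMod.intCast_zmod_eq_zero_iff_dvd N 16).mp hNz
  have h16m : (16 : ℤ) ∣ m ^ 2 := hmsq ▸ h16
  obtain ⟨k, hk⟩ := four_dvd_of_sixteen_dvd_sq m h16m
  -- m ≥ 0
  have hrnn : 0 ≤ r := by
    have : (0 : ℝ) ≤ (r : ℝ) := by
      rw [hr]; push_cast
      rw [show ((4 : ℝ) * q) = 4 * A by rw [hq]]
      rw [← hsqrt]; exact Real.sqrt_nonneg _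
    exact_mod_cast this
  have hknn : 0 ≤ k := by
    have hmnn : 0 ≤ m := Rat.num_nonneg.mpr hrnn
    omega
  refine ⟨k, ?_⟩
  have : (4 : ℝ) * A = (m : ℝ) := by
    rw [← hsqrt, show ((m : ℤ) : ℝ) = ((m : ℚ) : ℝ) by push_cast; ring, hrm]
    rw [hr]
    push_cast
    rw [show ((4 : ℝ) * q) = 4 * A by rw [hq], ← hsqrt]
  rw [hk] at this
  push_cast at this
  linarith
end

section
/- For the parallelepiped spanned by v₁ = (103, 0, 0), v₂ = (5822/103, (84/103)√12090, 0), v₃ = (6647/103, (26010/41509)√12090, (66/403)√2405910), all edge lengths (‖v₁‖=103, ‖v₂‖=106, ‖v₃‖=271), all six face diagonals, and all four body diagonals are rational (it is a perfect parallelepiped). -/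
/-- Euclidean norm of a vector in ℝ³. -/
noncomputable def enorm3 (u : Fin 3 → ℝ) : ℝ :=
  Real.sqrt (u 0 ^ 2 + u 1 ^ 2 + u 2 ^ 2)

/-- A real number is rational. -/
def IsRat (x : ℝ) : Prop := ∃ q : ℚ, x = q

lemma enorm3_eq (u : Fin 3 → ℝ) (q : ℝ) (hq : 0 ≤ q)
    (h : u 0 ^ 2 + u 1 ^ 2 + u 2 ^ 2 = q ^ 2) : enorm3 u = q := by
  rw [enorm3, h]; exact Real.sqrt_sq hq

/-- The Sawyer–Reiter parallelepiped spanned by `(103,0,0)`,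
`(5822/103, (84/103)√12090, 0)`, `(6647/103, (26010/41509)√12090, (66/403)√2405910)`
is a perfect parallelepiped: edge lengths 103, 106, 271, and all six face
diagonals and all four body diagonals rational. -/
theorem perfect_parallelepiped_sawyer_reiter :
    let v₁ : Fin 3 → ℝ := ![103, 0, 0]
    let v₂ : Fin 3 → ℝ := ![5822 / 103, (84 / 103) * Real.sqrt 12090, 0]
    let v₃ : Fin 3 → ℝ :=
      ![6647 / 103, (26010 / 41509) * Real.sqrt 12090, (66 / 403) * Real.sqrt 2405910]
    enorm3 v₁ = 103 ∧ enorm3 v₂ = 106 ∧ enorm3 v₃ = 271 ∧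
    IsRat (enorm3 (v₁ + v₂)) ∧ IsRat (enorm3 (v₁ - v₂)) ∧
    IsRat (enorm3 (v₁ + v₃)) ∧ IsRat (enorm3 (v₁ - v₃)) ∧
    IsRat (enorm3 (v₂ + v₃)) ∧ IsRat (enorm3 (v₂ - v₃)) ∧
    IsRat (enorm3 (v₁ + v₂ + v₃)) ∧ IsRat (enorm3 (v₁ - v₂ + v₃)) ∧
    IsRat (enorm3 (-v₁ + v₂ + v₃)) ∧ IsRat (enorm3 (-v₁ - v₂ + v₃)) := by
  intro v₁ v₂ v₃
  have hS : Real.sqrt 12090 ^ 2 = 12090 := Real.sq_sqrt (by norm_num)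
  have hT : Real.sqrt 2405910 ^ 2 = 2405910 := Real.sq_sqrt (by norm_num)
  refine ⟨?_, ?_, ?_, ⟨183, enorm3_eq _ 183 (by norm_num) ?_⟩, ⟨101, enorm3_eq _ 101 (by norm_num) ?_⟩, ⟨312, enorm3_eq _ 312 (by norm_num) ?_⟩, ⟨266, enorm3_eq _ 266 (by norm_num) ?_⟩, ⟨323, enorm3_eq _ 323 (by norm_num) ?_⟩, ⟨255, enorm3_eq _ 255 (by norm_num) ?_⟩, ⟨374, enorm3_eq _ 374 (by norm_num) ?_⟩, ⟨278, enorm3_eq _ 278 (by norm_num) ?_⟩, ⟨300, enorm3_eq _ 300 (by norm_num) ?_⟩, ⟨272, enorm3_eq _ 272 (by norm_num) ?_⟩⟩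
  · exact enorm3_eq _ 103 (by norm_num) (by simp [v₁])
  · refine enorm3_eq _ 106 (by norm_num) ?_
    simp only [v₂, Matrix.cons_val_zero, Matrix.cons_val_one, Matrix.head_cons,
      Matrix.cons_val_two, Matrix.tail_cons]
    linear_combination ((7056:ℝ)/10609) * hS
  · refine enorm3_eq _ 271 (by norm_num) ?_
    simp only [v₃, Matrix.cons_val_zero, Matrix.cons_val_one, Matrix.head_cons,
      Matrix.cons_val_two, Matrix.tail_cons]
    linear_combination ((676520100:ℝ)/1722997081) * hS + ((4356:ℝ)/162409) * hT
  · simp only [v₁, v₂, v₃, Pi.add_apply, Pi.sub_apply, Pi.neg_apply,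
      Matrix.cons_val_zero, Matrix.cons_val_one, Matrix.head_cons,
      Matrix.cons_val_two, Matrix.tail_cons]
    linear_combination ((7056:ℝ)/10609) * hS
  · simp only [v₁, v₂, v₃, Pi.add_apply, Pi.sub_apply, Pi.neg_apply,
      Matrix.cons_val_zero, Matrix.cons_val_one, Matrix.head_cons,
      Matrix.cons_val_two, Matrix.tail_cons]
    linear_combination ((7056:ℝ)/10609) * hS
  · simp only [v₁, v₂, v₃, Pi.add_apply, Pi.sub_apply, Pi.neg_apply,
      Matrix.cons_val_zero, Matrix.cons_val_one, Matrix.head_cons,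
      Matrix.cons_val_two, Matrix.tail_cons]
    linear_combination ((676520100:ℝ)/1722997081) * hS + ((4356:ℝ)/162409) * hT
  · simp only [v₁, v₂, v₃, Pi.add_apply, Pi.sub_apply, Pi.neg_apply,
      Matrix.cons_val_zero, Matrix.cons_val_one, Matrix.head_cons,
      Matrix.cons_val_two, Matrix.tail_cons]
    linear_combination ((676520100:ℝ)/1722997081) * hS + ((4356:ℝ)/162409) * hT
  · simp only [v₁, v₂, v₃, Pi.add_apply, Pi.sub_apply, Pi.neg_apply,
      Matrix.cons_val_zero, Matrix.cons_val_one, Matrix.head_cons,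
      Matrix.cons_val_two, Matrix.tail_cons]
    linear_combination ((3583459044:ℝ)/1722997081) * hS + ((4356:ℝ)/162409) * hT
  · simp only [v₁, v₂, v₃, Pi.add_apply, Pi.sub_apply, Pi.neg_apply,
      Matrix.cons_val_zero, Matrix.cons_val_one, Matrix.head_cons,
      Matrix.cons_val_two, Matrix.tail_cons]
    linear_combination ((61496964:ℝ)/1722997081) * hS + ((4356:ℝ)/162409) * hT
  · simp only [v₁, v₂, v₃, Pi.add_apply, Pi.sub_apply, Pi.neg_apply,
      Matrix.cons_val_zero, Matrix.cons_val_one, Matrix.head_cons,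
      Matrix.cons_val_two, Matrix.tail_cons]
    linear_combination ((3583459044:ℝ)/1722997081) * hS + ((4356:ℝ)/162409) * hT
  · simp only [v₁, v₂, v₃, Pi.add_apply, Pi.sub_apply, Pi.neg_apply,
      Matrix.cons_val_zero, Matrix.cons_val_one, Matrix.head_cons,
      Matrix.cons_val_two, Matrix.tail_cons]
    linear_combination ((61496964:ℝ)/1722997081) * hS + ((4356:ℝ)/162409) * hT
  · simp only [v₁, v₂, v₃, Pi.add_apply, Pi.sub_apply, Pi.neg_apply,
      Matrix.cons_val_zero, Matrix.cons_val_one, Matrix.head_cons,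
      Matrix.cons_val_two, Matrix.tail_cons]
    linear_combination ((3583459044:ℝ)/1722997081) * hS + ((4356:ℝ)/162409) * hT
  · simp only [v₁, v₂, v₃, Pi.add_apply, Pi.sub_apply, Pi.neg_apply,
      Matrix.cons_val_zero, Matrix.cons_val_one, Matrix.head_cons,
      Matrix.cons_val_two, Matrix.tail_cons]
    linear_combination ((61496964:ℝ)/1722997081) * hS + ((4356:ℝ)/162409) * hT
end
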